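/- arXiv:2604.11108 — 2 statements merged into one kernel-verified Lean document; each statement's English description precedes it below -/
import Mathlib

section
/- For n ≥ 3, the function n ↦ (sec(π/n))^n (the critical gain K₀ for G(s) = 1/(1+s/α)^n) satisfies K₀(3) = 8, K₀(4) = 4, and K₀(n) → e^{π²/(2n)} asymptotics, in particular K₀(n) is strictly decreasing in n for n ≥ 3 and tends to 1 as n → ∞. -/
open Real Set

lemma aux_concave : StrictConcaveOn ℝ (Set.Icc 0 (Real.pi/3)) (fun x => Real.log (Real.cos x)) := by
  have hcont : ContinuousOn (fun x => Real.log (Real.cos x)) (Set.Icc 0 (Real.pi/3)) := by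
    apply Real.continuousOn_log.comp Real.continuous_cos.continuousOn
    intro x hx
    simp only [Set.mem_Icc] at hx
    have : 0 < Real.cos x := by
      apply Real.cos_pos_of_mem_Ioo
      constructor
      · linarith [Real.pi_pos, hx.1]
      · linarith [Real.pi_pos, hx.2]
    simpa using this.ne'
  apply StrictAntiOn.strictConcaveOn_of_deriv (convex_Icc _ _) hcont
  rw [interior_Icc]
  have hderiv : ∀ x ∈ Set.Ioo (0:ℝ) (Real.pi/3), deriv (fun x => Real.log (Real.cos x)) x = -Real.tan x := by
    intro x hx
    have hc : 0 < Real.cos x := by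
      apply Real.cos_pos_of_mem_Ioo
      constructor <;> [linarith [Real.pi_pos, hx.1]; linarith [Real.pi_pos, hx.2]]
    have := (Real.hasDerivAt_cos x).log hc.ne'
    rw [this.deriv, Real.tan_eq_sin_div_cos]
    ring
  intro x hx y hy hxy
  rw [hderiv x hx, hderiv y hy, neg_lt_neg_iff]
  apply Real.tan_lt_tan_of_nonneg_of_lt_pi_div_two hx.1.le _ hxy
  linarith [Real.pi_pos, hy.2]

theorem stmt9 :
    let K₀ : ℕ → ℝ := fun n => (1 / Real.cos (Real.pi / n)) ^ n
    K₀ 3 = 8 ∧ K₀ 4 = 4 ∧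
      (∀ m n : ℕ, 3 ≤ m → m < n → K₀ n < K₀ m) ∧
      Filter.Tendsto K₀ Filter.atTop (nhds 1) := by
  intro K₀
  have pi_pos := Real.pi_pos
  -- basic facts
  have hmem : ∀ n : ℕ, 3 ≤ n → Real.pi / n ∈ Set.Icc (0:ℝ) (Real.pi/3) := by
    intro n hn
    constructor
    · positivity
    · apply div_le_div_of_nonneg_left pi_pos.le (by norm_num)
      exact_mod_cast hn
  have hcos : ∀ n : ℕ, 3 ≤ n → (1:ℝ)/2 ≤ Real.cos (Real.pi / n) := by
    intro n hn
    have h := hmem n hn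
    have := Real.cos_le_cos_of_nonneg_of_le_pi h.1 (by linarith [h.2]) h.2
    rwa [Real.cos_pi_div_three] at this
  have hcospos : ∀ n : ℕ, 3 ≤ n → (0:ℝ) < Real.cos (Real.pi / n) := by
    intro n hn; linarith [hcos n hn]
  refine ⟨?_, ?_, ?_, ?_⟩
  · show (1 / Real.cos (Real.pi / (3:ℕ))) ^ 3 = 8
    have : ((3:ℕ):ℝ) = 3 := by norm_num
    rw [this, Real.cos_pi_div_three]
    norm_num
  · show (1 / Real.cos (Real.pi / (4:ℕ))) ^ 4 = 4
    have : ((4:ℕ):ℝ) = 4 := by norm_num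
    rw [this, Real.cos_pi_div_four]
    rw [div_pow, one_pow, div_pow]
    have h2 : Real.sqrt 2 ^ 4 = 4 := by
      have : Real.sqrt 2 ^ 4 = (Real.sqrt 2 ^ 2) ^ 2 := by ring
      rw [this, Real.sq_sqrt (by norm_num : (2:ℝ) ≥ 0)]; norm_num
    rw [h2]; norm_num
  · -- monotonicity
    intro m n hm hmn
    have hn : 3 ≤ n := hm.trans hmn.le
    have hcm := hcospos m hm
    have hcn := hcospos n hn
    have hm0 : (0:ℝ) < m := by positivity
    have hn0 : (0:ℝ) < n := by positivity
    -- strict concavity argument: log cos (π/n) > (m/n) * log cos (π/m)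
    have hconc := aux_concave.2 (hmem m hm) (Set.mem_Icc.mpr ⟨le_refl 0, by positivity⟩)
      (show Real.pi / m ≠ 0 by positivity)
      (show (0:ℝ) < (m:ℝ)/n by positivity)
      (show (0:ℝ) < 1 - (m:ℝ)/n by
        have : (m:ℝ) < n := by exact_mod_cast hmn
        rw [sub_pos, div_lt_one hn0]; exact this)
      (by ring)
    simp only [smul_eq_mul, Real.cos_zero, Real.log_one, mul_zero, add_zero] at hconc
    have harg : (m:ℝ)/n * (Real.pi / m) = Real.pi / n := by
      field_simp
    rw [harg] at hconc
    have hkey : (m:ℝ) * Real.log (Real.cos (Real.pi / m)) < n * Real.log (Real.cos (Real.pi / n)) := by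
      have := mul_lt_mul_of_pos_left hconc hn0
      calc (m:ℝ) * Real.log (Real.cos (Real.pi / m))
          = (n:ℝ) * ((m:ℝ)/n * Real.log (Real.cos (Real.pi / m))) := by field_simp
        _ < n * Real.log (Real.cos (Real.pi / n)) := this
    -- exponentiate
    have hexp : Real.cos (Real.pi / m) ^ m < Real.cos (Real.pi / n) ^ n := by
      have e1 : Real.cos (Real.pi / m) ^ m = Real.exp ((m:ℝ) * Real.log (Real.cos (Real.pi / m))) := by
        rw [Real.exp_nat_mul, Real.exp_log hcm]
      have e2 : Real.cos (Real.pi / n) ^ n = Real.exp ((n:ℝ) * Real.log (Real.cos (Real.pi / n))) := by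
        rw [Real.exp_nat_mul, Real.exp_log hcn]
      rw [e1, e2]
      exact Real.exp_lt_exp.mpr hkey
    show (1 / Real.cos (Real.pi / n)) ^ n < (1 / Real.cos (Real.pi / m)) ^ m
    rw [div_pow, div_pow, one_pow, one_pow]
    rw [div_lt_div_iff₀ (by positivity) (by positivity)]
    rw [one_mul, one_mul]
    exact hexp
  · -- limit
    have key : ∀ n : ℕ, 3 ≤ n → K₀ n = Real.exp ((n:ℝ) * Real.log (1 / Real.cos (Real.pi / n))) := by
      intro n hn
      have hcp := hcospos n hn
      rw [Real.exp_nat_mul, Real.exp_log (one_div_pos.mpr hcp)]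
    have hbound : ∀ n : ℕ, 3 ≤ n →
        (n:ℝ) * Real.log (1 / Real.cos (Real.pi / n)) ≤ Real.pi ^ 2 / n := by
      intro n hn
      have hc := hcos n hn
      have hcp := hcospos n hn
      have hn0 : (0:ℝ) < n := by positivity
      have h1 : Real.log (1 / Real.cos (Real.pi / n)) ≤ 1 / Real.cos (Real.pi / n) - 1 :=
        Real.log_le_sub_one_of_pos (by positivity)
      have h2 : 1 - Real.cos (Real.pi / n) ≤ (Real.pi / n) ^ 2 / 2 := by
        linarith [Real.one_sub_sq_div_two_le_cos (x := Real.pi / n)]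
      have h3 : 1 / Real.cos (Real.pi / n) - 1 = (1 - Real.cos (Real.pi / n)) / Real.cos (Real.pi / n) := by
        field_simp
      have h4 : (1 - Real.cos (Real.pi / n)) / Real.cos (Real.pi / n) ≤ ((Real.pi / n) ^ 2 / 2) / (1/2) := by
        apply div_le_div₀ (by positivity) h2 (by norm_num) hc
      have h5 : ((Real.pi / n) ^ 2 / 2) / (1/2) = Real.pi ^ 2 / n ^ 2 := by
        field_simp
      have : Real.log (1 / Real.cos (Real.pi / n)) ≤ Real.pi ^ 2 / n ^ 2 := by
        rw [h3] at h1; linarith [h4, h5 ▸ h4]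
      calc (n:ℝ) * Real.log (1 / Real.cos (Real.pi / n)) ≤ (n:ℝ) * (Real.pi ^ 2 / n ^ 2) :=
            mul_le_mul_of_nonneg_left this hn0.le
        _ = Real.pi ^ 2 / n := by field_simp
    have hnonneg : ∀ n : ℕ, 3 ≤ n → 0 ≤ (n:ℝ) * Real.log (1 / Real.cos (Real.pi / n)) := by
      intro n hn
      have hc := hcos n hn
      have hcp := hcospos n hn
      apply mul_nonneg (by positivity)
      apply Real.log_nonneg
      rw [le_div_iff₀ hcp, one_mul]
      exact Real.cos_le_one _
    have htend : Filter.Tendsto (fun n : ℕ => (n:ℝ) * Real.log (1 / Real.cos (Real.pi / n)))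
        Filter.atTop (nhds 0) := by
      apply tendsto_of_tendsto_of_tendsto_of_le_of_le' tendsto_const_nhds
        (tendsto_const_div_atTop_nhds_zero_nat (Real.pi ^ 2))
      · filter_upwards [Filter.eventually_ge_atTop 3] with n hn using hnonneg n hn
      · filter_upwards [Filter.eventually_ge_atTop 3] with n hn using hbound n hn
    have := (Real.continuous_exp.continuousAt (x := (0:ℝ))).tendsto.comp htend
    rw [Real.exp_zero] at this
    apply this.congr'
    filter_upwards [Filter.eventually_ge_atTop 3] with n hn
    exact (key n hn).symm
end

section
/- Let b > 0, α > 0, and let x(t) be the solution of ẋ = α(b - x) with x(0) = x₀ ∈ (-b, b). For any K₋ > 0 and threshold condition -K₋ x(t*) = a - K₊ b (with a, K₊ > 0, K₊ b > a), a crossing time t* ≥ 0 exists for all initial x₀ ∈ (-b, (K₊b - a)/K₋] if and only if K₋ > K₊ - a/b. -/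
theorem stmt19 (a b Kp Km α : ℝ) (ha : 0 < a) (hb : 0 < b) (hKp : 0 < Kp)
    (hKm : 0 < Km) (hα : 0 < α) (hba : Kp * b > a) :
    (∀ x₀ ∈ Set.Ioc (-b) ((Kp * b - a) / Km),
      ∃ t ≥ (0 : ℝ),
        -Km * (b * (1 - Real.exp (-α * t)) + x₀ * Real.exp (-α * t)) = a - Kp * b) ↔
      Km > Kp - a / b := by
  set L : ℝ := (Kp * b - a) / Km with hL
  have hLpos : 0 < L := div_pos (by linarith) hKm
  constructor
  · intro h
    by_contra hc
    push_neg at hc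
    -- hc : Km ≤ Kp - a/b, so L ≥ b
    have hLb : b ≤ L := by
      rw [hL, le_div_iff₀ hKm]
      have : (Kp - a / b) * b ≤ Kp * b - a := by
        field_simp; exact le_refl _
      nlinarith [mul_le_mul_of_nonneg_right hc hb.le]
    obtain ⟨t, ht, heq⟩ := h 0 ⟨by linarith, by linarith⟩
    have hexp : 0 < Real.exp (-α * t) := Real.exp_pos _
    have hexp1 : Real.exp (-α * t) ≤ 1 := by
      apply Real.exp_le_one_iff.mpr
      nlinarith
    -- heq : -Km * (b * (1 - e) + 0) = a - Kp*b, so b*(1-e) = L < b, but b*(1-e) < b, fine,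
    have : b * (1 - Real.exp (-α * t)) = L := by
      have hKm' : Km ≠ 0 := ne_of_gt hKm
      field_simp [hL] at heq ⊢
      rw [hL, eq_div_iff hKm']; linear_combination -heq
    nlinarith
  · intro h x₀ hx₀
    obtain ⟨hx1, hx2⟩ := hx₀
    have hLb : L < b := by
      rw [hL, div_lt_iff₀ hKm]
      have : (Kp - a / b) * b = Kp * b - a := by field_simp
      nlinarith [mul_lt_mul_of_pos_right h hb]
    have hden : 0 < b - x₀ := by linarith
    have hr : 0 < (b - L) / (b - x₀) := div_pos (by linarith) hden
    have hr1 : (b - L) / (b - x₀) ≤ 1 := by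
      rw [div_le_one hden]; linarith
    refine ⟨-Real.log ((b - L) / (b - x₀)) / α, ?_, ?_⟩
    · apply div_nonneg _ hα.le
      simp only [neg_nonneg]
      exact Real.log_nonpos hr.le hr1
    · have hαne : α ≠ 0 := ne_of_gt hα
      have : -α * (-Real.log ((b - L) / (b - x₀)) / α) = Real.log ((b - L) / (b - x₀)) := by
        field_simp
      rw [this, Real.exp_log hr]
      have hKm' : Km ≠ 0 := ne_of_gt hKm
      have hdne : b - x₀ ≠ 0 := ne_of_gt hden
      field_simp [hL]
      have hKL : Km * L = Kp * b - a := by rw [hL]; field_simp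
      linear_combination (x₀ - b) * hKL
end
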